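/- arXiv:1502.04566 — 11 statements merged into one kernel-verified Lean document; each statement's English description precedes it below -/
import Mathlib

section
/- Let f(x) be the Hankel quartic form in four variables generated by v ∈ ℝ^{13}. If f(x) ≥ 0 for all x ∈ ℝ^4, then for each i ∈ {0, 4, 8}, v_i + 6 v_{i+2} + v_{i+4} ≥ 4 |v_{i+1} + v_{i+3}|. -/
noncomputable def hankelForm (v : Fin 13 → ℝ) (x : Fin 4 → ℝ) : ℝ :=
  ∑ i1 : Fin 4, ∑ i2 : Fin 4, ∑ i3 : Fin 4, ∑ i4 : Fin 4,
    v ⟨i1.1 + i2.1 + i3.1 + i4.1, by omega⟩ * x i1 * x i2 * x i3 * x i4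

lemma fin3val : ((3 : Fin 4) : ℕ) = 3 := rfl

theorem stmt2 (v : Fin 13 → ℝ) (hpsd : ∀ x : Fin 4 → ℝ, 0 ≤ hankelForm v x) :
    (4 * |v 1 + v 3| ≤ v 0 + 6 * v 2 + v 4) ∧
    (4 * |v 5 + v 7| ≤ v 4 + 6 * v 6 + v 8) ∧
    (4 * |v 9 + v 11| ≤ v 8 + 6 * v 10 + v 12) := by
  have h1 := hpsd ![1, 1, 0, 0]
  have h2 := hpsd ![1, -1, 0, 0]
  have h3 := hpsd ![0, 1, 1, 0]
  have h4 := hpsd ![0, 1, -1, 0]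
  have h5 := hpsd ![0, 0, 1, 1]
  have h6 := hpsd ![0, 0, 1, -1]
  simp [hankelForm, Fin.sum_univ_four, fin3val] at h1 h2 h3 h4 h5 h6
  refine ⟨?_, ?_, ?_⟩
  · rcases abs_cases (v 1 + v 3) with ⟨h, _⟩ | ⟨h, _⟩ <;> rw [h] <;> linarith
  · rcases abs_cases (v 5 + v 7) with ⟨h, _⟩ | ⟨h, _⟩ <;> rw [h] <;> linarith
  · rcases abs_cases (v 9 + v 11) with ⟨h, _⟩ | ⟨h, _⟩ <;> rw [h] <;> linarith
end

section
/- Let f(x) be the Hankel quartic form in four variables generated by v ∈ ℝ^{13}. If f(x) ≥ 0 for all x ∈ ℝ^4, then for each i ∈ {0, 4}, v_i + 6 v_{i+4} + v_{i+8} ≥ 4 |v_{i+2} + v_{i+6}|. -/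
theorem stmt3 (v : Fin 13 → ℝ) (hpsd : ∀ x : Fin 4 → ℝ, 0 ≤ hankelForm v x) :
    (4 * |v 2 + v 6| ≤ v 0 + 6 * v 4 + v 8) ∧
    (4 * |v 6 + v 10| ≤ v 4 + 6 * v 8 + v 12) := by
  have h1 := hpsd ![1, 0, 1, 0]
  have h2 := hpsd ![1, 0, -1, 0]
  have h3 := hpsd ![0, 1, 0, 1]
  have h4 := hpsd ![0, 1, 0, -1]
  simp [hankelForm, Fin.sum_univ_four, show ((3 : Fin 4) : ℕ) = 3 from rfl] at h1 h2 h3 h4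
  constructor
  · rcases abs_cases (v 2 + v 6) with ⟨h, _⟩ | ⟨h, _⟩ <;> rw [h] <;> linarith
  · rcases abs_cases (v 6 + v 10) with ⟨h, _⟩ | ⟨h, _⟩ <;> rw [h] <;> linarith
end

section
/- Let f(x) be the Hankel quartic form in four variables generated by v ∈ ℝ^{13}. If f(x) ≥ 0 for all x ∈ ℝ^4, then v_0 + 6 v_6 + v_{12} ≥ 4 |v_3 + v_9|. -/
theorem hankelForm_first_last (v : Fin 13 → ℝ) (s t : ℝ) :
    hankelForm v ![s, 0, 0, t] =
      v 0 * s ^ 4 + 4 * v 3 * s ^ 3 * t + 6 * v 6 * s ^ 2 * t ^ 2 + 4 * v 9 * s * t ^ 3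
        + v 12 * t ^ 4 := by
  simp only [hankelForm, Fin.sum_univ_four, Fin.isValue, Fin.coe_ofNat_eq_mod, Nat.zero_mod,
    add_zero, Fin.zero_eta, Matrix.cons_val_zero, Nat.one_mod, zero_add, Fin.mk_one,
    Matrix.cons_val_one, mul_zero, Nat.reduceMod, Fin.reduceFinMk, Matrix.cons_val, Nat.mod_succ,
    zero_mul, Nat.reduceAdd]
  ring

theorem stmt4 (v : Fin 13 → ℝ) (hpsd : ∀ x : Fin 4 → ℝ, 0 ≤ hankelForm v x) :
    4 * |v 3 + v 9| ≤ v 0 + 6 * v 6 + v 12 := by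
  have h_plus := hpsd ![1, 0, 0, 1]
  have h_minus := hpsd ![1, 0, 0, -1]
  rw [hankelForm_first_last] at h_plus h_minus
  rw [← le_div_iff₀' four_pos, abs_le]
  constructor <;> linarith
end

section
/- Let f(x) be the Hankel quartic form in four variables generated by v ∈ ℝ^{13} with v_0 = 0. If f(x) ≥ 0 for all x ∈ ℝ^4, then v_j = 0 for all j = 1, ..., 11, and hence f(x) = v_{12} x_4^4 with v_{12} ≥ 0. -/
theorem nonneg_of_sum_mul_pow_nonneg {n : ℕ} (a : Fin n → ℝ) (m : Fin n)
    (hlow : ∀ k < m, a k = 0) (hpos : ∀ s > 0, 0 ≤ ∑ k, a k * s ^ (k : ℕ)) : 0 ≤ a m := by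
  set g : ℝ → ℝ := fun s => ∑ k, a k * s ^ ((k : ℕ) - m)
  have hfactor (s : ℝ) : ∑ k, a k * s ^ (k : ℕ) = s ^ (m : ℕ) * g s := by
    rw [Finset.mul_sum]
    refine Finset.sum_congr rfl fun k _ => ?_
    rcases lt_or_ge k m with hk | hk
    · simp [hlow k hk]
    · rw [mul_left_comm, ← pow_add, Nat.add_sub_cancel' (Fin.le_def.mp hk)]
  have hg_pos : Set.Ioi 0 ⊆ {s | 0 ≤ g s} := fun s hs =>
    nonneg_of_mul_nonneg_right (hfactor s ▸ hpos s hs) (pow_pos hs _)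
  have hg_zero : g 0 = a m := by
    refine (Finset.sum_eq_single m (fun k _ hkm => ?_) (by simp)).trans (by simp)
    rcases lt_or_gt_of_ne hkm with hk | hk
    · simp [hlow k hk]
    · simp [Nat.sub_ne_zero_of_lt (Fin.lt_def.mp hk)]
  have hg_closure := (isClosed_le continuous_const (by fun_prop : Continuous g)).closure_subset_iff
    |>.mpr hg_pos
  rw [closure_Ioi] at hg_closure
  exact hg_zero ▸ hg_closure Set.self_mem_Ici

section WeightForm

variable {R : Type*} [CommSemiring R] {n : ℕ}

/-- The coefficient of `t ^ k` in `(∑ i, x i * t ^ i) ^ 4`. -/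
def weightForm (k : ℕ) (x : Fin n → R) : R :=
  ∑ i₁ : Fin n, ∑ i₂ : Fin n, ∑ i₃ : Fin n, ∑ i₄ : Fin n,
    if i₁.1 + i₂.1 + i₃.1 + i₄.1 = k then x i₁ * x i₂ * x i₃ * x i₄ else 0

theorem weightForm_pow_smul (k : ℕ) (s : R) (x : Fin n → R) :
    weightForm k (fun i => s ^ (i : ℕ) * x i) = s ^ k * weightForm k x := by
  simp only [weightForm, Finset.mul_sum, mul_ite, mul_zero]
  refine Finset.sum_congr rfl fun i₁ _ => Finset.sum_congr rfl fun i₂ _ =>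
    Finset.sum_congr rfl fun i₃ _ => Finset.sum_congr rfl fun i₄ _ => ?_
  split_ifs with h
  · rw [← h]; ring
  · rfl

theorem map_weightForm {S : Type*} [CommSemiring S] (f : R →+* S) (k : ℕ) (x : Fin n → R) :
    f (weightForm k x) = weightForm k (f ∘ x) := by
  simp only [weightForm, map_sum, apply_ite f, map_mul, map_zero, Function.comp_apply]

theorem weightForm_twelve (x : Fin 4 → R) : weightForm 12 x = x 3 ^ 4 := by
  simp [weightForm, Fin.sum_univ_succ, pow_succ]

end WeightForm

theorem weightForm_indefinite_int {m : ℕ} (h₁ : 1 ≤ m) (h₁₁ : m ≤ 11) :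
    ∃ y y' : Fin 4 → ℤ, weightForm m y < 0 ∧ 0 < weightForm m y' := by
  interval_cases m <;>
    [use ![1, -1, 1, -1]; use ![1, 0, -1, 0]; use ![1, -1, 1, -1]; use ![-1, -1, 0, 1];
      use ![1, -1, 1, -1]; use ![1, 0, -1, 0]; use ![1, -1, 1, -1]; use ![-1, 0, 1, -1];
      use ![1, -1, 1, -1]; use ![0, 1, 0, -1]; use ![1, -1, 1, -1]] <;>
    exact ⟨![1, 1, 1, 1], by decide⟩

theorem weightForm_indefinite {m : ℕ} (h₁ : 1 ≤ m) (h₁₁ : m ≤ 11) :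
    ∃ y y' : Fin 4 → ℝ, weightForm m y < 0 ∧ 0 < weightForm m y' := by
  obtain ⟨y, y', hy, hy'⟩ := weightForm_indefinite_int h₁ h₁₁
  refine ⟨Int.castRingHom ℝ ∘ y, Int.castRingHom ℝ ∘ y', ?_, ?_⟩ <;>
    rw [← map_weightForm, eq_intCast] <;> exact_mod_cast ‹_›

theorem hankelForm_eq_sum_weightForm (v : Fin 13 → ℝ) (x : Fin 4 → ℝ) :
    hankelForm v x = ∑ k : Fin 13, v k * weightForm k x := by
  simp only [weightForm, Finset.mul_sum, mul_ite, mul_zero]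
  conv_rhs =>
    rw [Finset.sum_comm]; enter [2, i₁]
    rw [Finset.sum_comm]; enter [2, i₂]
    rw [Finset.sum_comm]; enter [2, i₃]
    rw [Finset.sum_comm]
  refine Finset.sum_congr rfl fun i₁ _ => Finset.sum_congr rfl fun i₂ _ =>
    Finset.sum_congr rfl fun i₃ _ => Finset.sum_congr rfl fun i₄ _ => ?_
  rw [Finset.sum_eq_single ⟨i₁.1 + i₂.1 + i₃.1 + i₄.1, by omega⟩]
  · rw [if_pos rfl]; ring
  · exact fun k _ hk => if_neg fun h => hk (Fin.ext h.symm)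
  · simp

theorem mul_weightForm_nonneg_of_hankelForm_nonneg {v : Fin 13 → ℝ}
    (hpsd : ∀ x, 0 ≤ hankelForm v x) (m : Fin 13) (hlow : ∀ k < m, v k = 0) (y : Fin 4 → ℝ) :
    0 ≤ v m * weightForm m y := by
  refine nonneg_of_sum_mul_pow_nonneg (fun k => v k * weightForm k y) m
    (fun k hk => by simp [hlow k hk]) fun s _ => ?_
  have hscaled := hpsd fun i => s ^ (i : ℕ) * y i
  simp only [hankelForm_eq_sum_weightForm, weightForm_pow_smul] at hscaled
  convert hscaled using 2 with k
  ring

theorem hankelForm_coeff_eq_zero {v : Fin 13 → ℝ} (h0 : v 0 = 0)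
    (hpsd : ∀ x, 0 ≤ hankelForm v x) (j : Fin 13) (hj : j.1 ≤ 11) : v j = 0 := by
  obtain ⟨j, hj13⟩ := j
  simp only at hj
  induction j using Nat.strong_induction_on with
  | _ j ih =>
    rcases Nat.eq_zero_or_pos j with rfl | hpos
    · exact h0
    have hlow : ∀ k < (⟨j, hj13⟩ : Fin 13), v k = 0 := fun k hk =>
      ih k (Fin.lt_def.mp hk) k.2 (by have := Fin.lt_def.mp hk; omega)
    obtain ⟨y, y', hy, hy'⟩ := weightForm_indefinite hpos hj
    exact le_antisymm
      (nonpos_of_mul_nonneg_left (mul_weightForm_nonneg_of_hankelForm_nonneg hpsd _ hlow y) hy)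
      (nonneg_of_mul_nonneg_left (mul_weightForm_nonneg_of_hankelForm_nonneg hpsd _ hlow y') hy')

theorem stmt5 (v : Fin 13 → ℝ) (h0 : v 0 = 0)
    (hpsd : ∀ x : Fin 4 → ℝ, 0 ≤ hankelForm v x) :
    (∀ j : Fin 13, 1 ≤ j.1 → j.1 ≤ 11 → v j = 0) ∧
    (∀ x : Fin 4 → ℝ, hankelForm v x = v 12 * (x 3) ^ 4) ∧ 0 ≤ v 12 := by
  have hvanish (k : Fin 13) (hk : k ≠ 12) : v k = 0 :=
    hankelForm_coeff_eq_zero h0 hpsd k (by omega)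
  have hform (x : Fin 4 → ℝ) : hankelForm v x = v 12 * x 3 ^ 4 := by
    rw [hankelForm_eq_sum_weightForm, ← weightForm_twelve,
      Finset.sum_eq_single 12 (fun k _ hk => by rw [hvanish k hk, zero_mul]) (by simp)]
    rfl
  refine ⟨fun j _ hj => hankelForm_coeff_eq_zero h0 hpsd j hj, hform, ?_⟩
  simpa [hform] using hpsd 1
end

section
/- Let g(y_1, y_2) = α y_1^4 + 4β y_1^3 y_2 + 6γ y_1^2 y_2^2 + 4β y_1 y_2^3 + α y_2^4. If γ ≤ 0 and α ≥ 4|β| - 3γ, then g(y_1, y_2) ≥ 0 for all real y_1, y_2. -/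
theorem stmt7 (α β γ : ℝ) (hγ : γ ≤ 0) (hα : 4 * |β| - 3 * γ ≤ α) :
    ∀ y₁ y₂ : ℝ, 0 ≤ α * y₁ ^ 4 + 4 * β * y₁ ^ 3 * y₂ + 6 * γ * y₁ ^ 2 * y₂ ^ 2
      + 4 * β * y₁ * y₂ ^ 3 + α * y₂ ^ 4 := by
  intro y₁ y₂
  have h1 : β ≤ |β| := le_abs_self β
  have h2 : -|β| ≤ β := neg_abs_le β
  have hy4 : 0 ≤ y₁ ^ 4 + y₂ ^ 4 := by positivity
  have hγ' : 0 ≤ -γ := by linarith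
  have hsq : (0:ℝ) ≤ y₁ ^ 2 + y₂ ^ 2 := by positivity
  rcases le_or_gt 0 (y₁ * y₂) with h | h
  · nlinarith [mul_nonneg (mul_nonneg (by linarith : (0:ℝ) ≤ β + |β|) h) hsq,
      mul_nonneg (abs_nonneg β) (sq_nonneg (y₁^2 - y₁*y₂)),
      mul_nonneg (abs_nonneg β) (sq_nonneg (y₂^2 - y₁*y₂)),
      mul_nonneg (abs_nonneg β) (sq_nonneg (y₁^2 - y₂^2)),
      mul_nonneg hγ' (sq_nonneg (y₁^2 - y₂^2))]
  · nlinarith [mul_nonneg (mul_nonneg (by linarith : (0:ℝ) ≤ |β| - β) (by linarith : (0:ℝ) ≤ -(y₁*y₂))) hsq,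
      mul_nonneg (abs_nonneg β) (sq_nonneg (y₁^2 + y₁*y₂)),
      mul_nonneg (abs_nonneg β) (sq_nonneg (y₂^2 + y₁*y₂)),
      mul_nonneg (abs_nonneg β) (sq_nonneg (y₁^2 - y₂^2)),
      mul_nonneg hγ' (sq_nonneg (y₁^2 - y₂^2))]
end

section
/- Let g(y_1, y_2) = α y_1^4 + 4β y_1^3 y_2 + 6γ y_1^2 y_2^2 + 4β y_1 y_2^3 + α y_2^4. If 0 < γ ≤ |β| and α ≥ 4|β| - 3γ, then g(y_1, y_2) ≥ 0 for all real y_1, y_2. -/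
theorem stmt8 (α β γ : ℝ) (hγ0 : 0 < γ) (hγ : γ ≤ |β|) (hα : 4 * |β| - 3 * γ ≤ α) :
    ∀ y₁ y₂ : ℝ, 0 ≤ α * y₁ ^ 4 + 4 * β * y₁ ^ 3 * y₂ + 6 * γ * y₁ ^ 2 * y₂ ^ 2
      + 4 * β * y₁ * y₂ ^ 3 + α * y₂ ^ 4 := by
  intro y₁ y₂
  rcases le_or_gt 0 β with hβ | hβ
  · rw [abs_of_nonneg hβ] at hγ hα
    have h1 : 0 ≤ (α - 4 * β + 3 * γ) * (y₁ ^ 4 + y₂ ^ 4) :=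
      mul_nonneg (by linarith) (by positivity)
    have hx : (0:ℝ) ≤ y₁ ^ 2 - y₁ * y₂ + y₂ ^ 2 := by nlinarith [sq_nonneg (y₁ - y₂)]
    have h2 : 0 ≤ (y₁ + y₂) ^ 2 *
        (4 * (β - γ) * (y₁ ^ 2 - y₁ * y₂ + y₂ ^ 2) + γ * (y₁ + y₂) ^ 2) := by
      have h3 := mul_nonneg (sub_nonneg.2 hγ) hx
      have h4 : 0 ≤ γ * (y₁ + y₂) ^ 2 := mul_nonneg hγ0.le (sq_nonneg _)
      exact mul_nonneg (sq_nonneg _) (by linarith)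
    nlinarith [h1, h2]
  · rw [abs_of_neg hβ] at hγ hα
    have h1 : 0 ≤ (α + 4 * β + 3 * γ) * (y₁ ^ 4 + y₂ ^ 4) :=
      mul_nonneg (by linarith) (by positivity)
    have hx : (0:ℝ) ≤ y₁ ^ 2 + y₁ * y₂ + y₂ ^ 2 := by nlinarith [sq_nonneg (y₁ + y₂)]
    have h2 : 0 ≤ (y₁ - y₂) ^ 2 *
        (4 * (-β - γ) * (y₁ ^ 2 + y₁ * y₂ + y₂ ^ 2) + γ * (y₁ - y₂) ^ 2) := by
      have h3 := mul_nonneg (sub_nonneg.2 hγ) hx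
      have h4 : 0 ≤ γ * (y₁ - y₂) ^ 2 := mul_nonneg hγ0.le (sq_nonneg _)
      exact mul_nonneg (sq_nonneg _) (by linarith)
    nlinarith [h1, h2]
end

section
/- Let g(y_1, y_2) = α y_1^4 + 4β y_1^3 y_2 + 6γ y_1^2 y_2^2 + 4β y_1 y_2^3 + α y_2^4 with γ ≤ |β|. Then g(y_1, y_2) ≥ 0 for all real y_1, y_2 if and only if α ≥ 4|β| - 3γ. -/
lemma key9 (b γ α : ℝ) (hb : 0 ≤ b) (hγ : γ ≤ b) (hα : 4 * b - 3 * γ ≤ α)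
    (y₁ y₂ : ℝ) (h1 : 0 ≤ y₁) (h2 : 0 ≤ y₂) :
    0 ≤ α * y₁ ^ 4 - 4 * b * y₁ ^ 3 * y₂ + 6 * γ * y₁ ^ 2 * y₂ ^ 2
      - 4 * b * y₁ * y₂ ^ 3 + α * y₂ ^ 4 := by
  nlinarith [sq_nonneg (y₁ - y₂), sq_nonneg (y₁ + y₂), sq_nonneg (y₁ * y₂),
    mul_nonneg h1 h2, sq_nonneg (y₁ ^ 2 - y₂ ^ 2), sq_nonneg (y₁ ^ 2 + y₂ ^ 2 - 2 * y₁ * y₂),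
    mul_nonneg (mul_nonneg h1 h2) (sq_nonneg (y₁ - y₂)),
    mul_nonneg (sub_nonneg.mpr hγ) (mul_nonneg (mul_nonneg h1 h2) (sq_nonneg (y₁ - y₂))),
    mul_nonneg (sub_nonneg.mpr hγ) (sq_nonneg (y₁ ^ 2 - y₂ ^ 2)),
    mul_nonneg hb (mul_nonneg (mul_nonneg h1 h2) (sq_nonneg (y₁ - y₂))),
    mul_nonneg (sub_nonneg.mpr hα) (sq_nonneg (y₁ ^ 2 - y₂ ^ 2)),
    mul_nonneg (sub_nonneg.mpr hα) (sq_nonneg (y₁ - y₂))]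

theorem stmt9 (α β γ : ℝ) (hγ : γ ≤ |β|) :
    (∀ y₁ y₂ : ℝ, 0 ≤ α * y₁ ^ 4 + 4 * β * y₁ ^ 3 * y₂ + 6 * γ * y₁ ^ 2 * y₂ ^ 2
      + 4 * β * y₁ * y₂ ^ 3 + α * y₂ ^ 4) ↔ 4 * |β| - 3 * γ ≤ α := by
  constructor
  · intro h
    have h1 := h 1 1
    have h2 := h 1 (-1)
    rcases abs_cases β with ⟨hb, _⟩ | ⟨hb, _⟩ <;> rw [hb] <;> nlinarith
  · intro hα y₁ y₂
    have hb : 0 ≤ |β| := abs_nonneg β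
    have key := key9 |β| γ α hb hγ hα |y₁| |y₂| (abs_nonneg _) (abs_nonneg _)
    have e1 : |y₁| ^ 4 = y₁ ^ 4 := by rw [← abs_pow]; exact abs_of_nonneg (by positivity)
    have e2 : |y₂| ^ 4 = y₂ ^ 4 := by rw [← abs_pow]; exact abs_of_nonneg (by positivity)
    have e3 : |y₁| ^ 2 = y₁ ^ 2 := sq_abs y₁
    have e4 : |y₂| ^ 2 = y₂ ^ 2 := sq_abs y₂
    have cross : -( |β| * (|y₁| ^ 3 * |y₂| + |y₁| * |y₂| ^ 3))
        ≤ β * (y₁ ^ 3 * y₂ + y₁ * y₂ ^ 3) := by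
      have : |β * (y₁ ^ 3 * y₂ + y₁ * y₂ ^ 3)| = |β| * (|y₁| ^ 3 * |y₂| + |y₁| * |y₂| ^ 3) := by
        rw [abs_mul]
        congr 1
        have : y₁ ^ 3 * y₂ + y₁ * y₂ ^ 3 = y₁ * y₂ * (y₁ ^ 2 + y₂ ^ 2) := by ring
        rw [this, abs_mul, abs_mul, abs_of_nonneg (by positivity : (0:ℝ) ≤ y₁ ^ 2 + y₂ ^ 2)]
        rw [← e3, ← e4]; ring
      rw [← this]; exact neg_abs_le _
    rw [e1, e2, e3, e4] at key
    linarith [key, cross]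
end

section
/- Let g(y_1, y_2) = α y_1^4 + 4β y_1^3 y_2 + 6γ y_1^2 y_2^2 + 4β y_1 y_2^3 + α y_2^4 with γ > |β| ≥ 0. Then g(y_1, y_2) ≥ 0 for all real y_1, y_2 if and only if α ≥ (3γ - √(9γ² - 8β²))/2. -/
set_option maxHeartbeats 1000000 in
theorem stmt10 (α β γ : ℝ) (hγ : |β| < γ) :
    (∀ y₁ y₂ : ℝ, 0 ≤ α * y₁ ^ 4 + 4 * β * y₁ ^ 3 * y₂ + 6 * γ * y₁ ^ 2 * y₂ ^ 2
      + 4 * β * y₁ * y₂ ^ 3 + α * y₂ ^ 4) ↔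
    (3 * γ - Real.sqrt (9 * γ ^ 2 - 8 * β ^ 2)) / 2 ≤ α := by
  have hb0 : 0 ≤ |β| := abs_nonneg β
  have hγ0 : 0 < γ := lt_of_le_of_lt hb0 hγ
  have habs : |β| ^ 2 = β ^ 2 := sq_abs β
  have hβ2 : β ^ 2 < γ ^ 2 := by nlinarith
  have hX : 0 ≤ 9 * γ ^ 2 - 8 * β ^ 2 := by nlinarith
  set S := Real.sqrt (9 * γ ^ 2 - 8 * β ^ 2) with hSdef
  have hS0 : 0 ≤ S := Real.sqrt_nonneg _
  have hS2 : S ^ 2 = 9 * γ ^ 2 - 8 * β ^ 2 := Real.sq_sqrt hX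
  have hsq : (4 * |β| - 3 * γ) ^ 2 ≤ 9 * γ ^ 2 - 8 * β ^ 2 := by
    nlinarith [mul_nonneg hb0 (sub_pos.mpr hγ).le]
  have hkey1 : 4 * |β| - 3 * γ ≤ S := Real.le_sqrt_of_sq_le hsq
  have hkey2 : 3 * γ - 4 * |β| ≤ S := Real.le_sqrt_of_sq_le (by nlinarith)
  constructor
  · intro h
    by_contra hc
    push_neg at hc
    have hd : 0 < 3 * γ - α := by nlinarith
    have hquad : 0 < α ^ 2 - 3 * γ * α + 2 * β ^ 2 := by
      have h1 : 0 < (3 * γ - S) / 2 - α := by linarith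
      have h2 : 0 < (3 * γ + S) / 2 - α := by linarith
      have hP := mul_pos h1 h2
      have hE : ((3 * γ - S) / 2 - α) * ((3 * γ + S) / 2 - α)
          = α ^ 2 - 3 * γ * α + 2 * β ^ 2 := by linear_combination (-1/4 : ℝ) * hS2
      linarith [hP, hE]
    have hba : 2 * |β| < 3 * γ - α := by linarith
    set t := -β / (3 * γ - α) with ht
    have htval : t * (3 * γ - α) = -β := by
      rw [ht]; field_simp
    have hβle : β ≤ |β| := le_abs_self β
    have hβge : -|β| ≤ β := neg_abs_le β
    have ht1 : 0 ≤ 1 + 2 * t := by nlinarith [htval]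
    have ht2 : 0 ≤ 1 - 2 * t := by nlinarith [htval]
    set u := Real.sqrt (1 + 2 * t) with hu
    set v := Real.sqrt (1 - 2 * t) with hv
    have hu2 : u ^ 2 = 1 + 2 * t := Real.sq_sqrt ht1
    have hv2 : v ^ 2 = 1 - 2 * t := Real.sq_sqrt ht2
    have hg := h ((u + v) / 2) ((u - v) / 2)
    have hp : ((u + v) / 2) ^ 2 + ((u - v) / 2) ^ 2 = 1 := by
      linear_combination hu2 / 2 + hv2 / 2
    have hq : ((u + v) / 2) * ((u - v) / 2) = t := by
      linear_combination hu2 / 4 - hv2 / 4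
    have hgval : α * ((u + v) / 2) ^ 4 + 4 * β * ((u + v) / 2) ^ 3 * ((u - v) / 2)
        + 6 * γ * ((u + v) / 2) ^ 2 * ((u - v) / 2) ^ 2
        + 4 * β * ((u + v) / 2) * ((u - v) / 2) ^ 3 + α * ((u - v) / 2) ^ 4
        = α * (1 - 2 * t ^ 2) + 4 * β * t + 6 * γ * t ^ 2 := by
      have e : α * ((u + v) / 2) ^ 4 + 4 * β * ((u + v) / 2) ^ 3 * ((u - v) / 2)
          + 6 * γ * ((u + v) / 2) ^ 2 * ((u - v) / 2) ^ 2
          + 4 * β * ((u + v) / 2) * ((u - v) / 2) ^ 3 + α * ((u - v) / 2) ^ 4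
          = α * (((((u + v) / 2)) ^ 2 + (((u - v) / 2)) ^ 2) ^ 2
              - 2 * ((((u + v) / 2)) * (((u - v) / 2))) ^ 2)
            + 4 * β * ((((u + v) / 2)) * (((u - v) / 2)))
              * ((((u + v) / 2)) ^ 2 + (((u - v) / 2)) ^ 2)
            + 6 * γ * ((((u + v) / 2)) * (((u - v) / 2))) ^ 2 := by ring
      rw [e, hp, hq]; ring
    rw [hgval] at hg
    have hid : (α * (1 - 2 * t ^ 2) + 4 * β * t + 6 * γ * t ^ 2) * (3 * γ - α) ^ 2
        = (α * (3 * γ - α) - 2 * β ^ 2) * (3 * γ - α) := by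
      linear_combination ((6 * γ - 2 * α) * (t * (3 * γ - α) - β)
        + 4 * β * (3 * γ - α)) * htval
    have hA : 0 ≤ (α * (1 - 2 * t ^ 2) + 4 * β * t + 6 * γ * t ^ 2) * (3 * γ - α) ^ 2 :=
      mul_nonneg hg (by positivity)
    have hB : (α * (3 * γ - α) - 2 * β ^ 2) * (3 * γ - α) < 0 :=
      mul_neg_of_neg_of_pos (by linarith [hquad]) hd
    linarith [hid, hA, hB]
  · intro hα y₁ y₂
    have key : ∀ p q : ℝ, 0 ≤ p → 4 * q ^ 2 ≤ p ^ 2 →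
        0 ≤ α * (p ^ 2 - 2 * q ^ 2) + 4 * β * q * p + 6 * γ * q ^ 2 := by
      intro p q hp0 hpq
      have hS3 : S ≤ 3 * γ := by nlinarith [hS2, hS0, sq_nonneg β, hγ0]
      have hα0 : 0 ≤ α := by linarith
      rcases le_or_gt (2 * β ^ 2) (α * (3 * γ - α)) with hcase | hcase
      · rcases eq_or_lt_of_le hα0 with h0 | hpos
        · have hβ0 : β = 0 := by nlinarith [sq_nonneg β]
          rw [← h0, hβ0]
          nlinarith [sq_nonneg q]
        · have hc : 0 ≤ α * (3 * γ - α) - 2 * β ^ 2 := by linarith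
          have hid2 : α * (α * (p ^ 2 - 2 * q ^ 2) + 4 * β * q * p + 6 * γ * q ^ 2)
              = (α * p + 2 * β * q) ^ 2
                + 2 * ((α * (3 * γ - α) - 2 * β ^ 2) * q ^ 2) := by ring
          have hnn : 0 ≤ α * (α * (p ^ 2 - 2 * q ^ 2) + 4 * β * q * p + 6 * γ * q ^ 2) := by
            rw [hid2]
            have := mul_nonneg hc (sq_nonneg q)
            have := sq_nonneg (α * p + 2 * β * q)
            linarith
          exact nonneg_of_mul_nonneg_right hnn hpos
      · have hquad : 0 < α ^ 2 - 3 * γ * α + 2 * β ^ 2 := by linarith [hcase]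
        have hge : 3 * γ - 2 * |β| ≤ α := by
          by_contra hcon
          push_neg at hcon
          have h1 : 0 ≤ α - (3 * γ - S) / 2 := by linarith
          have h2 : 0 ≤ (3 * γ + S) / 2 - α := by linarith
          have hP := mul_nonneg h1 h2
          have hE : (α - (3 * γ - S) / 2) * ((3 * γ + S) / 2 - α)
              = -(α ^ 2 - 3 * γ * α + 2 * β ^ 2) := by
            linear_combination (1/4 : ℝ) * hS2
          linarith [hP, hE]
        have hαpos : 0 < α := by linarith
        have hr : 2 * |q| ≤ p := by
          nlinarith [abs_nonneg q, sq_abs q]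
        have hβq : -(|β| * |q|) ≤ β * q := by
          have := neg_abs_le (β * q)
          rw [abs_mul] at this
          exact this
        have h1 : 0 ≤ α * (p - 2 * |q|) ^ 2 := mul_nonneg hαpos.le (sq_nonneg _)
        have h2 : 0 ≤ (α - |β|) * ((p - 2 * |q|) * |q|) :=
          mul_nonneg (by linarith) (mul_nonneg (by linarith) (abs_nonneg q))
        have h3 : 0 ≤ (6 * γ + 2 * α - 8 * |β|) * |q| ^ 2 :=
          mul_nonneg (by linarith) (sq_nonneg _)
        have h4 : 0 ≤ p * (β * q + |β| * |q|) := mul_nonneg hp0 (by linarith)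
        have hid3 : α * (p ^ 2 - 2 * q ^ 2) + 4 * β * q * p + 6 * γ * q ^ 2
            = α * (p - 2 * |q|) ^ 2 + 4 * ((α - |β|) * ((p - 2 * |q|) * |q|))
              + (6 * γ + 2 * α - 8 * |β|) * |q| ^ 2
              + 4 * (p * (β * q + |β| * |q|)) := by
          linear_combination (2 * α - 6 * γ) * (sq_abs q)
        rw [hid3]
        linarith [h1, h2, h3, h4]
    have h2 := key (y₁ ^ 2 + y₂ ^ 2) (y₁ * y₂) (by positivity)
      (by nlinarith [sq_nonneg (y₁ ^ 2 - y₂ ^ 2)])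
    linarith [h2]
end

section
/- If γ > |β| > 0 and ᾱ = (3γ - √(9γ² - 8β²))/2, then there exist real numbers y_1, y_2, not both zero, such that y_1² + (2β/ᾱ) y_1 y_2 + y_2² = 0. -/
/-!
The quadratic form `y₁² + c y₁ y₂ + y₂²` is isotropic exactly when its discriminant `c² - 4` is
nonnegative, i.e. when `|c| ≥ 2`. For `c = 2β/ᾱ` this means `ᾱ ≤ |β|`, which after squaring
`3γ - 2|β| ≤ √(9γ² - 8β²)` reduces to `β² ≤ γ|β|`.
-/

open Real

theorem exists_ne_zero_sq_add_mul_add_sq_eq_zero {c : ℝ} (hc : 2 ≤ |c|) :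
    ∃ y₁ y₂ : ℝ, ¬(y₁ = 0 ∧ y₂ = 0) ∧ y₁ ^ 2 + c * y₁ * y₂ + y₂ ^ 2 = 0 := by
  have hdisc : 0 ≤ discrim 1 c 1 := by
    rw [discrim]
    nlinarith [sq_abs c]
  obtain ⟨x, hx⟩ := exists_quadratic_eq_zero (one_ne_zero : (1 : ℝ) ≠ 0)
    ⟨√(discrim 1 c 1), (mul_self_sqrt hdisc).symm⟩
  exact ⟨x, 1, by simp, by linear_combination hx⟩

noncomputable def alphaBar (β γ : ℝ) : ℝ :=
  (3 * γ - √(9 * γ ^ 2 - 8 * β ^ 2)) / 2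

theorem alphaBar_pos {β γ : ℝ} (hβ : β ≠ 0) (hγ : 0 < γ) : 0 < alphaBar β γ := by
  have hlt : √(9 * γ ^ 2 - 8 * β ^ 2) < 3 * γ := by
    rw [sqrt_lt' (by positivity)]
    nlinarith [sq_pos_of_ne_zero hβ]
  unfold alphaBar
  linarith

theorem alphaBar_le_abs {β γ : ℝ} (hγ : |β| ≤ γ) : alphaBar β γ ≤ |β| := by
  have hle : 3 * γ - 2 * |β| ≤ √(9 * γ ^ 2 - 8 * β ^ 2) := by
    apply le_sqrt_of_sq_le
    nlinarith [sq_abs β, abs_nonneg β]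
  unfold alphaBar
  linarith

theorem two_le_abs_two_mul_div_alphaBar {β γ : ℝ} (hβ : β ≠ 0) (hγ : |β| ≤ γ) :
    2 ≤ |2 * β / alphaBar β γ| := by
  have hpos := alphaBar_pos hβ ((abs_pos.mpr hβ).trans_le hγ)
  rw [abs_div, abs_mul, abs_two, abs_of_pos hpos, le_div_iff₀ hpos]
  linarith [alphaBar_le_abs hγ]

theorem stmt12 (β γ : ℝ) (hβ : 0 < |β|) (hγ : |β| < γ) :
    ∃ y₁ y₂ : ℝ, ¬(y₁ = 0 ∧ y₂ = 0) ∧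
      y₁ ^ 2 + (2 * β / ((3 * γ - Real.sqrt (9 * γ ^ 2 - 8 * β ^ 2)) / 2)) * y₁ * y₂
        + y₂ ^ 2 = 0 :=
  exists_ne_zero_sq_add_mul_add_sq_eq_zero
    (two_le_abs_two_mul_div_alphaBar (abs_pos.mp hβ) hγ.le)
end

section
/- Let f(x) be the Hankel quartic form generated by the symmetric vector v with v_0 = v_{12}, v_1 = v_{11} = t, v_2 = v_{10} = 1, v_3 = v_9 = t, v_4 = v_8 = 1, v_5 = v_7 = t, v_6 = 1, where t ∈ [-1,1] and v_0 = 1. Then f(x) = ((1+t)/2)(x_1 + x_2 + x_3 + x_4)^4 + ((1-t)/2)(x_1 - x_2 + x_3 - x_4)^4 for all x ∈ ℝ^4, and consequently f is a sum of squares and f(1, 0, -1, 0) = 0. -/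
def IsQuadForm (q : (Fin 4 → ℝ) → ℝ) : Prop :=
  ∃ A : Matrix (Fin 4) (Fin 4) ℝ, ∀ x, q x = ∑ i, ∑ j, A i j * x i * x j

def IsSOSQuad (f : (Fin 4 → ℝ) → ℝ) : Prop :=
  ∃ (m : ℕ) (q : Fin m → (Fin 4 → ℝ) → ℝ),
    (∀ k, IsQuadForm (q k)) ∧ ∀ x, f x = ∑ k, (q k x) ^ 2

open Finset

lemma hankelForm_pow (r : ℝ) (x : Fin 4 → ℝ) :
    hankelForm (fun n => r ^ (n : ℕ)) x = (∑ i : Fin 4, r ^ (i : ℕ) * x i) ^ 4 := by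
  simp only [hankelForm, pow_succ, pow_zero, one_mul, sum_mul, mul_sum, pow_add]
  exact sum_congr rfl fun _ _ => sum_congr rfl fun _ _ => sum_congr rfl fun _ _ =>
    sum_congr rfl fun _ _ => by ring

lemma hankelForm_sum {m : ℕ} (c : Fin m → ℝ) (v : Fin m → Fin 13 → ℝ) (x : Fin 4 → ℝ) :
    hankelForm (fun n => ∑ k, c k * v k n) x = ∑ k, c k * hankelForm (v k) x := by
  simp only [hankelForm, sum_mul, mul_sum]
  symm
  rw [sum_comm]; refine sum_congr rfl fun _ _ => ?_
  rw [sum_comm]; refine sum_congr rfl fun _ _ => ?_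
  rw [sum_comm]; refine sum_congr rfl fun _ _ => ?_
  rw [sum_comm]; refine sum_congr rfl fun _ _ => ?_
  exact sum_congr rfl fun _ _ => by ring

lemma hankelForm_sum_pow {m : ℕ} (c r : Fin m → ℝ) (x : Fin 4 → ℝ) :
    hankelForm (fun n => ∑ k, c k * r k ^ (n : ℕ)) x =
      ∑ k, c k * (∑ i : Fin 4, r k ^ (i : ℕ) * x i) ^ 4 := by
  simp only [hankelForm_sum c (fun k (n : Fin 13) => r k ^ (n : ℕ)), hankelForm_pow]

lemma isQuadForm_mul_sq (a : ℝ) (w : Fin 4 → ℝ) :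
    IsQuadForm (fun x => a * (∑ i, w i * x i) ^ 2) := by
  refine ⟨Matrix.of fun i j => a * w i * w j, fun x => ?_⟩
  simp only [Matrix.of_apply]
  rw [sq, sum_mul_sum]
  simp only [mul_sum]
  exact sum_congr rfl fun _ _ => sum_congr rfl fun _ _ => by ring

lemma isSOSQuad_sum_mul_pow_four {m : ℕ} (c : Fin m → ℝ) (hc : ∀ k, 0 ≤ c k)
    (w : Fin m → Fin 4 → ℝ) : IsSOSQuad (fun x => ∑ k, c k * (∑ i, w k i * x i) ^ 4) :=
  ⟨m, fun k x => √(c k) * (∑ i, w k i * x i) ^ 2, fun k => isQuadForm_mul_sq _ _,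
    fun x => sum_congr rfl fun k _ => by rw [mul_pow, Real.sq_sqrt (hc k), ← pow_mul]⟩

theorem stmt15 (t : ℝ) (ht : t ∈ Set.Icc (-1 : ℝ) 1) (v : Fin 13 → ℝ)
    (hv0 : v 0 = 1) (hv2 : v 2 = 1) (hv4 : v 4 = 1) (hv6 : v 6 = 1)
    (hv8 : v 8 = 1) (hv10 : v 10 = 1) (hv12 : v 12 = 1)
    (hv1 : v 1 = t) (hv3 : v 3 = t) (hv5 : v 5 = t) (hv7 : v 7 = t)
    (hv9 : v 9 = t) (hv11 : v 11 = t) :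
    (∀ x : Fin 4 → ℝ, hankelForm v x =
      ((1 + t) / 2) * (x 0 + x 1 + x 2 + x 3) ^ 4
        + ((1 - t) / 2) * (x 0 - x 1 + x 2 - x 3) ^ 4) ∧
    IsSOSQuad (hankelForm v) ∧
    hankelForm v ![1, 0, -1, 0] = 0 := by
  set c : Fin 2 → ℝ := ![(1 + t) / 2, (1 - t) / 2]
  set r : Fin 2 → ℝ := ![1, -1]
  have hv : v = fun n : Fin 13 => ∑ k, c k * r k ^ (n : ℕ) := by
    funext n
    fin_cases n <;> simp [c, r, hv0, hv1, hv2, hv3, hv4, hv5, hv6, hv7, hv8, hv9, hv10, hv11, hv12]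
      <;> ring
  have hf : hankelForm v = fun x => ∑ k, c k * (∑ i : Fin 4, r k ^ (i : ℕ) * x i) ^ 4 :=
    funext fun x => hv ▸ hankelForm_sum_pow c r x
  have hc : ∀ k, 0 ≤ c k := by
    obtain ⟨ht₁, ht₂⟩ := ht
    intro k
    fin_cases k <;> simp [c] <;> linarith
  refine ⟨fun x => ?_, hf ▸ isSOSQuad_sum_mul_pow_four c hc _,
    by simp [hf, c, r, Fin.sum_univ_four]⟩
  simp only [hf, c, r, Fin.sum_univ_two, Fin.sum_univ_four, Matrix.cons_val_zero,
    Matrix.cons_val_one, Fin.val_zero, Fin.val_one, Fin.val_two,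
    show ((3 : Fin 4) : ℕ) = 3 from rfl, one_pow]
  ring
end

section
/- For b ≥ 1, the number θ̄ = (b-1)^{1/3}(b+1)^{2/3} + (b-1)^{2/3}(b+1)^{1/3} - 2b + 1 is the largest real root of the cubic equation (θ + 3b - 1)(θ² + (3b - 2)θ - 3b + 4) - b = 0 in θ. -/
set_option maxHeartbeats 1600000


theorem stmt17 (b : ℝ) (hb : 1 ≤ b)
    (θbar : ℝ)
    (hθbar : θbar = (b - 1) ^ ((1 : ℝ) / 3) * (b + 1) ^ ((2 : ℝ) / 3)
      + (b - 1) ^ ((2 : ℝ) / 3) * (b + 1) ^ ((1 : ℝ) / 3) - 2 * b + 1) :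
    (θbar + 3 * b - 1) * (θbar ^ 2 + (3 * b - 2) * θbar - 3 * b + 4) - b = 0 ∧
    ∀ θ : ℝ, (θ + 3 * b - 1) * (θ ^ 2 + (3 * b - 2) * θ - 3 * b + 4) - b = 0 →
      θ ≤ θbar := by
  have hb1 : (0:ℝ) ≤ b - 1 := by linarith
  have hb2 : (0:ℝ) ≤ b + 1 := by linarith
  set x : ℝ := (b - 1) ^ ((1 : ℝ) / 3) with hxdef
  set y : ℝ := (b + 1) ^ ((1 : ℝ) / 3) with hydef
  have hx0 : 0 ≤ x := Real.rpow_nonneg hb1 _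
  have hy0 : 0 ≤ y := Real.rpow_nonneg hb2 _
  have hx3 : x ^ 3 = b - 1 := by
    rw [hxdef, ← Real.rpow_natCast ((b - 1) ^ ((1:ℝ)/3)) 3, ← Real.rpow_mul hb1]
    norm_num
  have hy3 : y ^ 3 = b + 1 := by
    rw [hydef, ← Real.rpow_natCast ((b + 1) ^ ((1:ℝ)/3)) 3, ← Real.rpow_mul hb2]
    norm_num
  have hx2 : (b - 1) ^ ((2:ℝ)/3) = x ^ 2 := by
    rw [hxdef, ← Real.rpow_natCast ((b - 1) ^ ((1:ℝ)/3)) 2, ← Real.rpow_mul hb1]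
    norm_num
  have hy2 : (b + 1) ^ ((2:ℝ)/3) = y ^ 2 := by
    rw [hydef, ← Real.rpow_natCast ((b + 1) ^ ((1:ℝ)/3)) 2, ← Real.rpow_mul hb2]
    norm_num
  have hθ : θbar = x * y ^ 2 + x ^ 2 * y - 2 * b + 1 := by
    rw [hθbar, hx2, hy2]
  constructor
  · -- θbar is a root
    linear_combination
      (4 - 2*θbar + θbar^2 - x*y^2 + x*y^2*θbar - x^2*y + x^2*y*θbar + x^2*y^4
        + 2*x^3*y^3 + x^4*y^2 - 4*b + 4*b*θbar + 2*b*x*y^2 + 2*b*x^2*y + b^2) * hθ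
      + (-(y^3) + y^6 + 3*x*y^5 + 3*x^2*y^4 + x^3*y^3 + b*y^3) * hx3
      + (-(y^3) - 3*x*y^2 - 3*x^2*y - 2*b + b*y^3 + 3*b*x*y^2 + 3*b*x^2*y + 2*b^2) * hy3
  · intro θ hroot
    have key : (θ + 2*b - 1)^3 - 3*x^3*y^3*(θ + 2*b - 1) - (x^3 + y^3)*(x^3*y^3) = 0 := by
      linear_combination hroot
        + (4*y^3 - 3*y^3*θ - y^6 - x^3*y^3 - 7*b*y^3) * hx3
        + (-3 + 3*θ + y^3 + 11*b - 3*b*θ - b*y^3 - 8*b^2) * hy3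
    have hfac : (θ - θbar) *
        ((θ + 2*b - 1)^2 + (x*y^2 + x^2*y)*(θ + 2*b - 1) + (x*y^2 + x^2*y)^2 - 3*x^3*y^3)
        = 0 := by
      linear_combination key
        - ((θ + 2*b - 1)^2 + (x*y^2 + x^2*y)*(θ + 2*b - 1) + (x*y^2 + x^2*y)^2
            - 3*x^3*y^3) * hθ
    rcases mul_eq_zero.mp hfac with h | hq
    · linarith [sub_eq_zero.mp h]
    · have hsq : (2*(θ + 2*b - 1) + (x*y^2 + x^2*y))^2 + 3*(x*y^2 - x^2*y)^2 = 0 := by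
        linear_combination 4 * hq
      have h1 : 2*(θ + 2*b - 1) + (x*y^2 + x^2*y) = 0 := by
        nlinarith [sq_nonneg (2*(θ + 2*b - 1) + (x*y^2 + x^2*y)), sq_nonneg (x*y^2 - x^2*y)]
      have hs0 : 0 ≤ x*y^2 + x^2*y := by positivity
      rw [hθ]
      linarith
end
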